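/- arXiv:math/0408099 — 3 statements merged into one kernel-verified Lean document; each statement's English description precedes it below -/
import Mathlib

section
/- Let a, b, c, d be real numbers satisfying b − a ≤ c − b ≤ d − c. Then for every real number x, min(3x + a, 2x + b, x + c, d) = a + min(x, b − a) + min(x, c − b) + min(x, d − c). -/
/-- Factorization of the tropical cubic
a ⊙ x³ ⊕ b ⊙ x² ⊕ c ⊙ x ⊕ d = a ⊙ (x ⊕ (b−a)) ⊙ (x ⊕ (c−b)) ⊙ (x ⊕ (d−c))
when b − a ≤ c − b ≤ d − c. -/
theorem tropical_cubic_factorization (a b c d : ℝ)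
    (h1 : b - a ≤ c - b) (h2 : c - b ≤ d - c) (x : ℝ) :
    min (3 * x + a) (min (2 * x + b) (min (x + c) d))
      = a + min x (b - a) + min x (c - b) + min x (d - c) := by
  rcases le_total x (b - a) with hb | hb <;>
  rcases le_total x (c - b) with hc | hc <;>
  rcases le_total x (d - c) with hd | hd <;>
  simp [min_eq_left, min_eq_right, hb, hc, hd, min_def] <;>
  split_ifs <;> linarith
end

section
/- Let u = (u₁, u₂) and w = (w₁, w₂) be points of ℝ² satisfying the genericity conditions u₁ ≠ w₁, u₂ ≠ w₂, and u₁ − u₂ ≠ w₁ − w₂. Then there exist real numbers a, b, c such that at each of the two points u and w the minimum of a + x, b + y, c is attained at least twice; moreover (a, b, c) is unique up to adding a common real constant to all three coordinates. -/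
/-- The point (x,y) lies on the tropical line with coefficients (a,b,c):
the minimum of a + x, b + y, c is attained at least twice. -/
def OnTropicalLine (a b c x y : ℝ) : Prop :=
  (a + x = b + y ∧ a + x ≤ c) ∨ (a + x = c ∧ a + x ≤ b + y) ∨ (b + y = c ∧ b + y ≤ a + x)

/-- Two general points of ℝ² lie on a tropical line whose coefficient
vector (a,b,c) is unique up to adding a common constant. -/
theorem tropical_line_through_two_points (u w : ℝ × ℝ)
    (h1 : u.1 ≠ w.1) (h2 : u.2 ≠ w.2) (h3 : u.1 - u.2 ≠ w.1 - w.2) :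
    ∃ a b c : ℝ, (OnTropicalLine a b c u.1 u.2 ∧ OnTropicalLine a b c w.1 w.2) ∧
      ∀ a' b' c' : ℝ, OnTropicalLine a' b' c' u.1 u.2 → OnTropicalLine a' b' c' w.1 w.2 →
        ∃ l : ℝ, a' = a + l ∧ b' = b + l ∧ c' = c + l := by
  obtain ⟨x1, x2⟩ := u
  obtain ⟨y1, y2⟩ := w
  dsimp only at h1 h2 h3 ⊢
  unfold OnTropicalLine
  rcases lt_or_gt_of_ne h1 with d1 | d1 <;>
    rcases lt_or_gt_of_ne h2 with d2 | d2 <;>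
      rcases lt_or_gt_of_ne h3 with d3 | d3
  · -- u on diagonal ray, w on horizontal ray
    refine ⟨x2 - x1 - y2, -y2, 0,
      ⟨Or.inl ⟨by ring, by linarith⟩, Or.inr (Or.inr ⟨by ring, by linarith⟩)⟩, ?_⟩
    intro a' b' c' hu hw
    rcases hu with ⟨e1, e2⟩ | ⟨e1, e2⟩ | ⟨e1, e2⟩ <;>
      rcases hw with ⟨f1, f2⟩ | ⟨f1, f2⟩ | ⟨f1, f2⟩ <;>
        exact ⟨c', by linarith, by linarith, by linarith⟩
  · -- u on diagonal ray, w on vertical ray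
    refine ⟨-y1, x1 - x2 - y1, 0,
      ⟨Or.inl ⟨by ring, by linarith⟩, Or.inr (Or.inl ⟨by ring, by linarith⟩)⟩, ?_⟩
    intro a' b' c' hu hw
    rcases hu with ⟨e1, e2⟩ | ⟨e1, e2⟩ | ⟨e1, e2⟩ <;>
      rcases hw with ⟨f1, f2⟩ | ⟨f1, f2⟩ | ⟨f1, f2⟩ <;>
        exact ⟨c', by linarith, by linarith, by linarith⟩
  · -- u on vertical ray, w on horizontal ray
    refine ⟨-x1, -y2, 0,
      ⟨Or.inr (Or.inl ⟨by ring, by linarith⟩), Or.inr (Or.inr ⟨by ring, by linarith⟩)⟩, ?_⟩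
    intro a' b' c' hu hw
    rcases hu with ⟨e1, e2⟩ | ⟨e1, e2⟩ | ⟨e1, e2⟩ <;>
      rcases hw with ⟨f1, f2⟩ | ⟨f1, f2⟩ | ⟨f1, f2⟩ <;>
        exact ⟨c', by linarith, by linarith, by linarith⟩
  · exact absurd d3 (by linarith)
  · exact absurd d3 (by linarith)
  · -- u on horizontal ray, w on vertical ray
    refine ⟨-y1, -x2, 0,
      ⟨Or.inr (Or.inr ⟨by ring, by linarith⟩), Or.inr (Or.inl ⟨by ring, by linarith⟩)⟩, ?_⟩
    intro a' b' c' hu hw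
    rcases hu with ⟨e1, e2⟩ | ⟨e1, e2⟩ | ⟨e1, e2⟩ <;>
      rcases hw with ⟨f1, f2⟩ | ⟨f1, f2⟩ | ⟨f1, f2⟩ <;>
        exact ⟨c', by linarith, by linarith, by linarith⟩
  · -- u on vertical ray, w on diagonal ray
    refine ⟨-x1, y1 - y2 - x1, 0,
      ⟨Or.inr (Or.inl ⟨by ring, by linarith⟩), Or.inl ⟨by ring, by linarith⟩⟩, ?_⟩
    intro a' b' c' hu hw
    rcases hu with ⟨e1, e2⟩ | ⟨e1, e2⟩ | ⟨e1, e2⟩ <;>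
      rcases hw with ⟨f1, f2⟩ | ⟨f1, f2⟩ | ⟨f1, f2⟩ <;>
        exact ⟨c', by linarith, by linarith, by linarith⟩
  · -- u on horizontal ray, w on diagonal ray
    refine ⟨y2 - y1 - x2, -x2, 0,
      ⟨Or.inr (Or.inr ⟨by ring, by linarith⟩), Or.inl ⟨by ring, by linarith⟩⟩, ?_⟩
    intro a' b' c' hu hw
    rcases hu with ⟨e1, e2⟩ | ⟨e1, e2⟩ | ⟨e1, e2⟩ <;>
      rcases hw with ⟨f1, f2⟩ | ⟨f1, f2⟩ | ⟨f1, f2⟩ <;>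
        exact ⟨c', by linarith, by linarith, by linarith⟩
end

section
/- Let n ≥ 1 and let c₀, c₁, …, cₙ be real numbers, and define p : ℝ → ℝ by p(x) = min over i ∈ {0,…,n} of (c_i + i·x). Then there exists a unique nondecreasing tuple r₁ ≤ r₂ ≤ ⋯ ≤ rₙ of real numbers such that p(x) = cₙ + min(x, r₁) + min(x, r₂) + ⋯ + min(x, rₙ) for all x ∈ ℝ. -/
open Finset

private lemma trop_sum_min_step {n : ℕ} (u : Fin n → ℝ) (t ε : ℝ) (hε0 : 0 ≤ ε)
    (hε : ∀ i, t < u i → t + ε ≤ u i) :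
    ∑ i, min (t + ε) (u i)
      = (∑ i, min t (u i)) + ((univ.filter fun i => t < u i).card : ℝ) * ε := by
  have key : ∀ i : Fin n, min (t + ε) (u i) = min t (u i) + (if t < u i then ε else 0) := by
    intro i
    by_cases h : t < u i
    · rw [if_pos h, min_eq_left (hε i h), min_eq_left h.le]
    · push_neg at h
      rw [if_neg (not_lt.mpr h), min_eq_right h, min_eq_right (by linarith), add_zero]
  simp_rw [key]
  rw [Finset.sum_add_distrib, ← Finset.sum_filter, Finset.sum_const, nsmul_eq_mul]

private lemma trop_le_of_count {n : ℕ} (r s : Fin n → ℝ) (hr : Monotone r) (hs : Monotone s)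
    (h : ∀ t : ℝ, (univ.filter fun i => t < r i).card = (univ.filter fun i => t < s i).card) :
    ∀ k, r k ≤ s k := by
  intro k
  by_contra hlt
  push_neg at hlt
  have h1 : (univ.filter fun i => s k < s i) ⊆ (univ.filter fun i : Fin n => k < i) := by
    intro i hi
    simp only [mem_filter, mem_univ, true_and] at *
    by_contra hik
    push_neg at hik
    exact absurd (hs hik) (not_le.mpr hi)
  have h2 : (univ.filter fun i : Fin n => k ≤ i) ⊆ (univ.filter fun i => s k < r i) := by
    intro i hi
    simp only [mem_filter, mem_univ, true_and] at *
    exact lt_of_lt_of_le hlt (hr hi)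
  have h3 : (univ.filter fun i : Fin n => k < i) ⊂ (univ.filter fun i : Fin n => k ≤ i) := by
    constructor
    · intro i hi
      simp only [mem_filter, mem_univ, true_and] at *
      exact hi.le
    · intro hsub
      have := hsub (mem_filter.mpr ⟨mem_univ k, le_refl k⟩)
      simp only [mem_filter, mem_univ, true_and] at this
      exact absurd this (lt_irrefl k)
  have c1 := card_le_card h1
  have c2 := card_le_card h2
  have c3 := card_lt_card h3
  have := h (s k)
  omega

private lemma trop_count_eq {n : ℕ} (hn : 1 ≤ n) (u v : Fin n → ℝ)
    (h : ∀ x : ℝ, ∑ i, min x (u i) = ∑ i, min x (v i)) (t : ℝ) :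
    (univ.filter fun i => t < u i).card = (univ.filter fun i => t < v i).card := by
  haveI : Nonempty (Fin n) := ⟨⟨0, hn⟩⟩
  set ε := min 1 (univ.inf' univ_nonempty fun i : Fin n =>
    min (if t < u i then u i - t else 1) (if t < v i then v i - t else 1)) with hεdef
  have hε0 : 0 < ε := by
    apply lt_min one_pos
    rw [Finset.lt_inf'_iff]
    intro i _
    by_cases h1 : t < u i <;> by_cases h2 : h1 = h1 <;>
      · by_cases h2 : t < v i <;> simp only [h1, h2, if_pos, if_neg, if_true, if_false] <;>
          refine lt_min (by simp_all; try linarith) (by simp_all; try linarith)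
  have hεu : ∀ i, t < u i → t + ε ≤ u i := by
    intro i hi
    have h1 : ε ≤ min (if t < u i then u i - t else 1) (if t < v i then v i - t else 1) :=
      le_trans (min_le_right _ _) (inf'_le _ (mem_univ i))
    have h2 := le_trans h1 (min_le_left _ _)
    rw [if_pos hi] at h2; linarith
  have hεv : ∀ i, t < v i → t + ε ≤ v i := by
    intro i hi
    have h1 : ε ≤ min (if t < u i then u i - t else 1) (if t < v i then v i - t else 1) :=
      le_trans (min_le_right _ _) (inf'_le _ (mem_univ i))
    have h2 := le_trans h1 (min_le_right _ _)
    rw [if_pos hi] at h2; linarith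
  have e1 := trop_sum_min_step u t ε hε0.le hεu
  have e2 := trop_sum_min_step v t ε hε0.le hεv
  have := h t
  have h2 := h (t + ε)
  rw [e1, e2, this] at h2
  have : ((univ.filter fun i => t < u i).card : ℝ) = (univ.filter fun i => t < v i).card := by
    have := mul_right_cancel₀ hε0.ne' (by linarith : ((univ.filter fun i => t < u i).card : ℝ) * ε = ((univ.filter fun i => t < v i).card : ℝ) * ε)
    exact this
  exact_mod_cast this

/-- Tropical Fundamental Theorem of Algebra: the tropical polynomial
function p(x) = min_{0 ≤ i ≤ n} (cᵢ + i·x) has a unique representation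
p(x) = cₙ + min(x,r₁) + ⋯ + min(x,rₙ) with r₁ ≤ ⋯ ≤ rₙ. -/
theorem tropical_fundamental_theorem (n : ℕ) (hn : 1 ≤ n) (c : Fin (n + 1) → ℝ) :
    ∃! r : Fin n → ℝ, Monotone r ∧
      ∀ x : ℝ,
        (Finset.univ.inf' Finset.univ_nonempty fun i : Fin (n + 1) => c i + (i.1 : ℝ) * x)
          = c (Fin.last n) + ∑ i : Fin n, min x (r i) := by
  let p : ℝ → ℝ := fun x => Finset.univ.inf' Finset.univ_nonempty
    fun i : Fin (n + 1) => c i + (i.1 : ℝ) * x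
  have hple : ∀ (x : ℝ) (k : Fin (n + 1)), p x ≤ c k + (k.1 : ℝ) * x :=
    fun x k => inf'_le _ (mem_univ k)
  let d : ℕ → ℝ := fun k => ⨆ x : ℝ, (p x - k * x)
  have hbdd : ∀ k : ℕ, k ≤ n → BddAbove (Set.range fun x : ℝ => p x - k * x) := by
    intro k hk
    refine ⟨c ⟨k, by omega⟩, ?_⟩
    rintro _ ⟨x, rfl⟩
    have := hple x ⟨k, by omega⟩
    simp only at this ⊢
    linarith
  have hdge : ∀ k : ℕ, k ≤ n → ∀ x : ℝ, p x - k * x ≤ d k :=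
    fun k hk x => le_ciSup (hbdd k hk) x
  have hdle : ∀ k : ℕ, ∀ hk : k ≤ n, d k ≤ c ⟨k, Nat.lt_succ_of_le hk⟩ := by
    intro k hk
    apply ciSup_le
    intro x
    have := hple x ⟨k, by omega⟩
    simp only at this
    linarith
  -- d n = c (last n)
  have hdn : d n = c (Fin.last n) := by
    apply le_antisymm
    · exact hdle n le_rfl
    · set x₀ := univ.inf' univ_nonempty
        (fun i : Fin (n + 1) => (c i - c (Fin.last n)) / ((n : ℝ) - i.1)) with hx0
      have key : ∀ i : Fin (n + 1), c (Fin.last n) + (n : ℝ) * x₀ ≤ c i + (i.1 : ℝ) * x₀ := by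
        intro i
        rcases eq_or_lt_of_le (Nat.lt_succ_iff.mp i.2) with h | h
        · have hi : i = Fin.last n := Fin.ext h
          rw [hi]
          simp [Fin.val_last]
        · have hpos : (0 : ℝ) < (n : ℝ) - i.1 := by
            have : (i.1 : ℝ) < n := by exact_mod_cast h
            linarith
          have hle : x₀ ≤ (c i - c (Fin.last n)) / ((n : ℝ) - i.1) := inf'_le _ (mem_univ i)
          rw [le_div_iff₀ hpos] at hle
          nlinarith
      have hpx : c (Fin.last n) + (n : ℝ) * x₀ ≤ p x₀ := le_inf' _ _ (fun i _ => key i)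
      have h1 := hdge n le_rfl x₀
      have h2 := hple x₀ (Fin.last n)
      rw [Fin.val_last] at h2
      linarith
  -- convexity
  have hdconv : ∀ m : ℕ, 1 ≤ m → m + 1 ≤ n → 2 * d m ≤ d (m - 1) + d (m + 1) := by
    intro m h1 h2
    have hm : d m ≤ (d (m - 1) + d (m + 1)) / 2 := by
      apply ciSup_le
      intro x
      have ha := hdge (m - 1) (by omega) x
      have hb := hdge (m + 1) (by omega) x
      have c1 : ((m - 1 : ℕ) : ℝ) = (m : ℝ) - 1 := by
        rw [Nat.cast_sub h1]; norm_num
      have c2 : ((m + 1 : ℕ) : ℝ) = (m : ℝ) + 1 := by push_cast; ring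
      rw [c1] at ha
      rw [c2] at hb
      linarith
    linarith
  -- the roots
  let r' : ℕ → ℝ := fun j => d (n - 1 - j) - d (n - j)
  have hadj : ∀ j : ℕ, j + 1 < n → r' j ≤ r' (j + 1) := by
    intro j hj
    have e1 : n - j = (n - 1 - j) + 1 := by omega
    have e2 : n - 1 - (j + 1) = (n - 1 - j) - 1 := by omega
    have e3 : n - (j + 1) = n - 1 - j := by omega
    have hc := hdconv (n - 1 - j) (by omega) (by omega)
    show d (n - 1 - j) - d (n - j) ≤ d (n - 1 - (j + 1)) - d (n - (j + 1))
    rw [e1, e2, e3]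
    linarith
  have hmono : ∀ b : ℕ, b < n → ∀ a : ℕ, a ≤ b → r' a ≤ r' b := by
    intro b
    induction b with
    | zero => intro _ a ha; rw [Nat.le_zero.mp ha]
    | succ m ih =>
      intro hb a ha
      rcases eq_or_lt_of_le ha with h | h
      · rw [h]
      · exact le_trans (ih (by omega) a (by omega)) (hadj m hb)
  have hsum : ∀ j : ℕ, j ≤ n → ∑ i ∈ range j, r' i = d (n - j) - d n := by
    intro j
    induction j with
    | zero => intro _; simp
    | succ m ih =>
      intro hm
      rw [Finset.sum_range_succ, ih (by omega)]
      show d (n - m) - d n + (d (n - 1 - m) - d (n - m)) = _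
      have : n - (m + 1) = n - 1 - m := by omega
      rw [this]
      ring
  have main : ∀ x : ℝ, p x = c (Fin.last n) + ∑ i ∈ range n, min x (r' i) := by
    intro x
    apply le_antisymm
    · set k := ((range n).filter fun i => r' i ≤ x).card with hkdef
      have hkn : k ≤ n := le_trans (card_filter_le _ _) (le_of_eq (card_range n))
      have h₁ : ∀ i, i < k → r' i ≤ x := by
        intro i hi
        by_contra hxi
        push_neg at hxi
        have hsub : ((range n).filter fun j => r' j ≤ x) ⊆ range i := by
          intro b hb
          simp only [mem_filter, mem_range] at hb
          rw [mem_range]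
          by_contra hbi
          push_neg at hbi
          exact absurd (le_trans (hmono b hb.1 i hbi) hb.2) (not_le.mpr hxi)
        have := card_le_card hsub
        rw [card_range] at this
        omega
      have h₂ : ∀ i, k ≤ i → i < n → x ≤ r' i := by
        intro i hki hin
        by_contra hxi
        push_neg at hxi
        have hsub : range (i + 1) ⊆ (range n).filter fun j => r' j ≤ x := by
          intro b hb
          rw [mem_range] at hb
          simp only [mem_filter, mem_range]
          exact ⟨by omega, le_trans (hmono i hin b (by omega)) hxi.le⟩
        have := card_le_card hsub
        rw [card_range] at this
        omega
      have hsplit : ∑ i ∈ range n, min x (r' i)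
          = ∑ i ∈ range k, min x (r' i) + ∑ i ∈ Ico k n, min x (r' i) := by
        rw [range_eq_Ico, ← sum_Ico_consecutive _ (Nat.zero_le k) hkn, ← range_eq_Ico]
      have e1 : ∑ i ∈ range k, min x (r' i) = ∑ i ∈ range k, r' i :=
        sum_congr rfl fun i hi => min_eq_right (h₁ i (mem_range.mp hi))
      have e2 : ∑ i ∈ Ico k n, min x (r' i) = ∑ _i ∈ Ico k n, x :=
        sum_congr rfl fun i hi => min_eq_left (h₂ i (mem_Ico.mp hi).1 (mem_Ico.mp hi).2)
      have e2' : ∑ _i ∈ Ico k n, (x : ℝ) = ((n - k : ℕ) : ℝ) * x := by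
        rw [sum_const, Nat.card_Ico, nsmul_eq_mul]
      have hdval := hdge (n - k) (by omega) x
      have hsumk := hsum k hkn
      rw [hsplit, e1, e2, e2', hsumk]
      linarith [hdn]
    · refine le_inf' _ _ fun m _ => ?_
      have hm1 : m.1 ≤ n := Nat.lt_succ_iff.mp m.2
      set k := n - m.1 with hkdef
      have hkn : k ≤ n := Nat.sub_le n m.1
      have hm : n - k = m.1 := by omega
      have hsplit : ∑ i ∈ range n, min x (r' i)
          = ∑ i ∈ range k, min x (r' i) + ∑ i ∈ Ico k n, min x (r' i) := by
        rw [range_eq_Ico, ← sum_Ico_consecutive _ (Nat.zero_le k) hkn, ← range_eq_Ico]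
      have b1 : ∑ i ∈ range k, min x (r' i) ≤ ∑ i ∈ range k, r' i :=
        sum_le_sum fun i _ => min_le_right _ _
      have b2 : ∑ i ∈ Ico k n, min x (r' i) ≤ ∑ _i ∈ Ico k n, x :=
        sum_le_sum fun i _ => min_le_left _ _
      have e2' : ∑ _i ∈ Ico k n, (x : ℝ) = ((n - k : ℕ) : ℝ) * x := by
        rw [sum_const, Nat.card_Ico, nsmul_eq_mul]
      have hsumk := hsum k hkn
      rw [hm] at hsumk
      have hcast : ((n - k : ℕ) : ℝ) = (m.1 : ℝ) := by rw [hm]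
      rw [hcast] at e2'
      have hcm : d m.1 ≤ c m := by
        have := hdle m.1 hm1
        rwa [Fin.eta] at this
      rw [hsplit]
      linarith [hdn]
  have hrmono : Monotone (fun i : Fin n => r' i.1) := fun a b hab => hmono b.1 b.2 a.1 hab
  have mainF : ∀ x : ℝ, p x = c (Fin.last n) + ∑ i : Fin n, min x (r' i.1) := by
    intro x
    rw [main x, ← Fin.sum_univ_eq_sum_range (fun i => min x (r' i)) n]
  refine ⟨fun i => r' i.1, ⟨hrmono, fun x => mainF x⟩, ?_⟩
  rintro y ⟨hymono, hyeq⟩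
  have hsums : ∀ x : ℝ, ∑ i : Fin n, min x (y i) = ∑ i : Fin n, min x (r' i.1) := by
    intro x
    have h1 : p x = c (Fin.last n) + ∑ i : Fin n, min x (y i) := hyeq x
    have h2 := mainF x
    linarith
  have hcnt := trop_count_eq hn y (fun i => r' i.1) hsums
  funext k
  exact le_antisymm (trop_le_of_count y _ hymono hrmono hcnt k)
    (trop_le_of_count _ y hrmono hymono (fun t => (hcnt t).symm) k)
end
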